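/- Let (S, A, δ, s₀) be a blind MDP with target ⊤ ∈ S. Then ⨆ over probability distributions σ on A of ReachProb(P_σ, ⊤, s₀) = 1 if and only if there exists a rank assignment r : A → Option ℕ, with r(a) ≠ none for at least one a ∈ A, such that, defining for each ε ∈ (0,1) the probability distribution σ_ε on A by σ_ε(a) := f(a,ε) / Σ_{a'} f(a',ε), where f(a,ε) := ε^k if r(a) = some k and f(a,ε) := 0 if r(a) = none, we have ReachProb(P_{σ_ε}, ⊤, s₀) → 1 as ε → 0⁺ (along the filter of right-neighborhoods of 0). -/

import Mathlib

open scoped BigOperators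

/-- Iterates whose supremum is the reachability probability. -/
noncomputable def reachAux {S : Type*} [Fintype S] [DecidableEq S]
    (P : S → S → ℝ) (t : S) : ℕ → S → ℝ
  | 0, x => if x = t then 1 else 0
  | n + 1, x => if x = t then 1 else ∑ y, P x y * reachAux P t n y

/-- Reachability probability of target `t` starting from `s` in the Markov chain `P`. -/
noncomputable def ReachProb {S : Type*} [Fintype S] [DecidableEq S]
    (P : S → S → ℝ) (t s : S) : ℝ :=
  ⨆ n : ℕ, reachAux P t n s

/-- The unnormalized weight of action `a` at parameter `ε` for the rank
assignment `r`: `ε ^ k` if `r a = some k`, and `0` if `r a = none`. -/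
noncomputable def rankWeight {A : Type*} (r : A → Option ℕ) (a : A) (ε : ℝ) : ℝ :=
  match r a with
  | some k => ε ^ k
  | none => 0

/-!
Fix the support `B` of a policy `σ` and let `X` be the set of states other than `⊤` from which
`⊤` is reachable in the graph of the actions of `B`. By the Markov chain tree theorem, the
probability of reaching `⊤` from `s₀` is `F / G`, where `G` is the total weight of the spanning
forests rooted outside `X` (an edge `x → y` labelled `a` weighs `σ a * δ x a y`) and `F` that
of the forests in which `s₀` hangs below `⊤`; this identification is the maximum principle for
the harmonic function `F / G - ReachProb`. Hence `1 - ReachProb = H / G` for the weight `H` of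
the forests avoiding `⊤`, and both `H` and `G` are polynomials in `σ` with nonnegative
coefficients, supported on finitely many forests.

If `ReachProb` is within a margin `η_B` of `1` for some `σ` with support `B` (there are finitely
many supports, so a supremum `1` provides such a `σ`), the largest monomial of `G` beats every
monomial of `H` by a factor `e`. Rounding up the exponents `(|X| + 1) · (-log σ a)` gives integer
ranks `L` for which some forest of `G` has strictly smaller `L`-degree than every forest of `H`,
so along `σ_ε a ∝ ε ^ L a` we get `H / G = O(ε)`. Conversely each `σ_ε` is a memoryless policy.
-/

open Finset Filter Topology Relation

section MarkovChain

variable {S : Type*} [Fintype S] [DecidableEq S] {P : S → S → ℝ} {t : S}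

lemma reachAux_nonneg (hP : ∀ x y, 0 ≤ P x y) (n : ℕ) (x : S) : 0 ≤ reachAux P t n x := by
  induction n generalizing x with
  | zero => unfold reachAux; split_ifs <;> norm_num
  | succ n ih =>
    unfold reachAux; split_ifs
    · exact zero_le_one
    · exact sum_nonneg fun y _ => mul_nonneg (hP x y) (ih y)

lemma reachAux_le_one (hP : P ∈ Matrix.rowStochastic ℝ S) (n : ℕ) (x : S) :
    reachAux P t n x ≤ 1 := by
  induction n generalizing x with
  | zero => unfold reachAux; split_ifs <;> norm_num
  | succ n ih =>
    unfold reachAux; split_ifs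
    · rfl
    · calc ∑ y, P x y * reachAux P t n y ≤ ∑ y, P x y :=
            sum_le_sum fun y _ => mul_le_of_le_one_right (hP.1 x y) (ih y)
        _ = 1 := Matrix.sum_row_of_mem_rowStochastic hP x

lemma reachAux_le_succ (hP : ∀ x y, 0 ≤ P x y) (n : ℕ) (x : S) :
    reachAux P t n x ≤ reachAux P t (n + 1) x := by
  induction n generalizing x with
  | zero =>
    simp only [reachAux]; split_ifs
    · rfl
    · exact sum_nonneg fun y _ => mul_nonneg (hP x y) (reachAux_nonneg hP 0 y)
  | succ n ih =>
    simp only [reachAux]; split_ifs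
    · rfl
    · exact sum_le_sum fun y _ => mul_le_mul_of_nonneg_left (ih y) (hP x y)

lemma tendsto_reachAux (hP : P ∈ Matrix.rowStochastic ℝ S) (x : S) :
    Tendsto (fun n => reachAux P t n x) atTop (𝓝 (ReachProb P t x)) :=
  tendsto_atTop_ciSup (monotone_nat_of_le_succ fun n => reachAux_le_succ hP.1 n x)
    ⟨1, Set.forall_mem_range.2 fun n => reachAux_le_one hP n x⟩

lemma reachProb_le_one (hP : P ∈ Matrix.rowStochastic ℝ S) (x : S) : ReachProb P t x ≤ 1 :=
  ciSup_le fun n => reachAux_le_one hP n x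

lemma reachProb_self : ReachProb P t t = 1 := by
  have (n : ℕ) : reachAux P t n t = 1 := by cases n <;> simp [reachAux]
  simp [ReachProb, this]

lemma reachProb_eq_sum (hP : P ∈ Matrix.rowStochastic ℝ S) {x : S} (hx : x ≠ t) :
    ReachProb P t x = ∑ y, P x y * ReachProb P t y := by
  refine tendsto_nhds_unique ((tendsto_reachAux hP x).comp (tendsto_add_atTop_nat 1)) ?_
  simp only [Function.comp_def, reachAux, if_neg hx]
  exact tendsto_finsetSum _ fun y _ => (tendsto_reachAux hP y).const_mul (P x y)

lemma reachProb_eq_zero (hP : ∀ x y, 0 ≤ P x y) {x : S}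
    (hx : ¬ ReflTransGen (fun x y => 0 < P x y) x t) : ReachProb P t x = 0 := by
  suffices h : ∀ n x, ¬ ReflTransGen (fun x y => 0 < P x y) x t → reachAux P t n x = 0 by
    simp [ReachProb, h _ x hx]
  intro n
  induction n with
  | zero =>
    intro x hx
    have hxt : x ≠ t := fun h => hx (h ▸ .refl)
    simp [reachAux, hxt]
  | succ n ih =>
    intro x hx
    simp only [reachAux, if_neg fun h : x = t => hx (h ▸ .refl)]
    refine sum_eq_zero fun y _ => ?_
    rcases (hP x y).lt_or_eq with hxy | hxy
    · rw [ih y fun hy => hx (.head hxy hy), mul_zero]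
    · rw [← hxy, zero_mul]

theorem nonpos_of_subharmonic (hP : P ∈ Matrix.rowStochastic ℝ S) {X : Set S} {d : S → ℝ}
    (hout : ∀ x ∉ X, d x ≤ 0) (hsub : ∀ x ∈ X, d x ≤ ∑ y, P x y * d y)
    (hexit : ∀ x ∈ X, ∃ z ∉ X, ReflTransGen (fun x y => 0 < P x y) x z) (x : S) :
    d x ≤ 0 := by
  by_contra! hx
  obtain ⟨x₀, -, hmax⟩ := exists_max_image univ d ⟨x, mem_univ x⟩
  have hpos : 0 < d x₀ := hx.trans_le (hmax x (mem_univ x))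
  have hmemX {y : S} (hy : d y = d x₀) : y ∈ X := by
    by_contra h
    exact (hout y h).not_gt (hy ▸ hpos)
  -- a maximum is propagated along every positive transition
  have hstep {y z : S} (hy : d y = d x₀) (hyz : 0 < P y z) : d z = d x₀ := by
    have hterm (w : S) : 0 ≤ P y w * (d x₀ - d w) :=
      mul_nonneg (hP.1 y w) (sub_nonneg.2 (hmax w (mem_univ w)))
    have hsum : ∑ w, P y w * (d x₀ - d w) = 0 := by
      refine le_antisymm ?_ (sum_nonneg fun w _ => hterm w)
      simp only [mul_sub, sum_sub_distrib, ← sum_mul, Matrix.sum_row_of_mem_rowStochastic hP]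
      linarith [hsub y (hmemX hy)]
    have := (sum_eq_zero_iff_of_nonneg fun w _ => hterm w).1 hsum z (mem_univ z)
    linarith [(mul_eq_zero.1 this).resolve_left hyz.ne']
  have hprop (z : S) (hz : ReflTransGen (fun x y => 0 < P x y) x₀ z) : d z = d x₀ := by
    induction hz with
    | refl => rfl
    | tail _ hyz ih => exact hstep ih hyz
  obtain ⟨z, hz, hpath⟩ := hexit x₀ (hmemX rfl)
  exact hz (hmemX (hprop z hpath))

theorem reachProb_eq_of_harmonic (hP : P ∈ Matrix.rowStochastic ℝ S) {v : S → ℝ}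
    (hvt : v t = 1) (hv0 : ∀ x, ¬ ReflTransGen (fun x y => 0 < P x y) x t → v x = 0)
    (hv : ∀ x ≠ t, ReflTransGen (fun x y => 0 < P x y) x t → v x = ∑ y, P x y * v y)
    (x : S) : ReachProb P t x = v x := by
  set X : Set S := {x | x ≠ t ∧ ReflTransGen (fun x y => 0 < P x y) x t}
  have hout : ∀ x ∉ X, ReachProb P t x = v x := by
    intro x hx
    by_cases hxt : x = t
    · rw [hxt, reachProb_self, hvt]
    · have hreach : ¬ ReflTransGen (fun x y => 0 < P x y) x t := fun h => hx ⟨hxt, h⟩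
      rw [reachProb_eq_zero hP.1 hreach, hv0 x hreach]
  have hexit : ∀ x ∈ X, ∃ z ∉ X, ReflTransGen (fun x y => 0 < P x y) x z :=
    fun x hx => ⟨t, fun ht => ht.1 rfl, hx.2⟩
  have hharm : ∀ x ∈ X, ReachProb P t x - v x = ∑ y, P x y * (ReachProb P t y - v y) := by
    intro x hx
    rw [reachProb_eq_sum hP hx.1, hv x hx.1 hx.2]
    simp only [mul_sub, sum_sub_distrib]
  refine le_antisymm (sub_nonpos.1 ?_) (sub_nonpos.1 ?_)
  · exact nonpos_of_subharmonic hP (fun y hy => (sub_eq_zero.2 (hout y hy)).le)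
      (fun y hy => (hharm y hy).le) hexit x
  · refine nonpos_of_subharmonic hP (d := fun y => v y - ReachProb P t y)
      (fun y hy => (sub_eq_zero.2 (hout y hy).symm).le) (fun y hy => ?_) hexit x
    simp only [← neg_sub (ReachProb P t _), mul_neg, sum_neg_distrib, hharm y hy, le_refl]

end MarkovChain

section Forest

open Function

variable {S : Type*}

lemma iterate_update_of_forall_ne [DecidableEq S] {f : S → S} {x y w : S}
    (h : ∀ n, f^[n] y ≠ x) (n : ℕ) : (update f x w)^[n] y = f^[n] y := by
  induction n with
  | zero => rfl
  | succ n ih => rw [iterate_succ_apply', iterate_succ_apply', ih, update_of_ne (h n)]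

lemma exists_iterate_update_self_eq_iff [DecidableEq S] {f : S → S} {x y t : S} (hxt : x ≠ t)
    (hy : ∀ n, f^[n] y ≠ x) : (∃ n, (update f x y)^[n] x = t) ↔ ∃ n, f^[n] y = t := by
  constructor
  · rintro ⟨_ | n, hn⟩
    · exact absurd hn hxt
    · exact ⟨n, by rwa [iterate_succ_apply, update_self, iterate_update_of_forall_ne hy] at hn⟩
  · rintro ⟨n, hn⟩
    exact ⟨n + 1, by rwa [iterate_succ_apply, update_self, iterate_update_of_forall_ne hy]⟩

/-- `f` is the parent map of a rooted spanning forest of `S` whose roots are the states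
outside `X`. -/
def IsForest (X : Finset S) (f : S → S) : Prop :=
  (∀ x ∉ X, f x = x) ∧ ∀ x, ∃ n, f^[n] x ∉ X

namespace IsForest

variable {X : Finset S} {f : S → S} {x y t : S}

lemma iterate_ne_self (hf : IsForest X f) (hx : x ∈ X) (n : ℕ) : f^[n] (f x) ≠ x := by
  intro h
  have hper : IsPeriodicPt f (n + 1) x := by rw [IsPeriodicPt, IsFixedPt, iterate_succ_apply, h]
  obtain ⟨m, hm⟩ := hf.2 x
  have hroot : f^[(n + 1) * m] x = f^[m] x := by
    rw [show (n + 1) * m = n * m + m by ring, iterate_add_apply, iterate_fixed (hf.1 _ hm)]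
  exact hm (hroot ▸ (hper.mul_const m).eq.symm ▸ hx)

lemma update [DecidableEq S] (hf : IsForest X f) (hx : x ∈ X) (hy : ∀ n, f^[n] y ≠ x) :
    IsForest X (update f x y) := by
  refine ⟨fun z hz => by rw [update_of_ne (fun h : z = x => hz (h ▸ hx)), hf.1 z hz],
    fun z => ?_⟩
  have hxleave : ∃ n, (Function.update f x y)^[n] x ∉ X := by
    obtain ⟨n, hn⟩ := hf.2 y
    exact ⟨n + 1, by rwa [iterate_succ_apply, update_self, iterate_update_of_forall_ne hy]⟩
  -- induction on the time at which the `f`-trajectory of `z` leaves `X`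
  have key (m : ℕ) : ∀ z, f^[m] z ∉ X → ∃ n, (Function.update f x y)^[n] z ∉ X := by
    induction m with
    | zero => exact fun z hz => ⟨0, hz⟩
    | succ m ih =>
      intro z hz
      by_cases hzx : z = x
      · exact hzx ▸ hxleave
      · obtain ⟨n, hn⟩ := ih (f z) (by rwa [← iterate_succ_apply])
        exact ⟨n + 1, by rwa [iterate_succ_apply, update_of_ne hzx]⟩
  obtain ⟨m, hm⟩ := hf.2 z
  exact key m z hm

lemma reaches_iff_of_reaches (hf : IsForest X f) (hx : x ∈ X) (ht : t ∉ X) {m : ℕ}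
    (hyx : f^[m] y = x) : (∃ n, f^[n] y = t) ↔ ∃ n, f^[n] x = t := by
  constructor
  · rintro ⟨n, hn⟩
    rcases le_total m n with h | h
    · exact ⟨n - m, by rw [← hyx, ← iterate_add_apply, Nat.sub_add_cancel h, hn]⟩
    · have : f^[m] y = f^[m - n] t := by rw [← hn, ← iterate_add_apply, Nat.sub_add_cancel h]
      rw [hyx, iterate_fixed (hf.1 t ht)] at this
      exact absurd (this ▸ hx) ht
  · rintro ⟨n, hn⟩
    exact ⟨n + m, by rw [iterate_add_apply, hyx, hn]⟩

lemma reaches_parent_update_iff [DecidableEq S] (hf : IsForest X f) (hx : x ∈ X) (hxt : x ≠ t)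
    (y : S) : (∃ n, (Function.update f x y)^[n] (f x) = t) ↔ ∃ n, f^[n] x = t := by
  simp only [iterate_update_of_forall_ne (hf.iterate_ne_self hx)]
  constructor
  · rintro ⟨n, hn⟩
    exact ⟨n + 1, by rwa [iterate_succ_apply]⟩
  · rintro ⟨_ | n, hn⟩
    · exact absurd hn hxt
    · exact ⟨n, by rwa [← iterate_succ_apply]⟩

end IsForest

lemma isForest_insert [DecidableEq S] {X : Finset S} {f : S → S} {x z : S} (hf : IsForest X f)
    (hz : z ∉ insert x X) : IsForest (insert x X) (update f x z) := by
  refine ⟨fun w hw => ?_, fun w => ?_⟩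
  · rw [mem_insert, not_or] at hw
    rw [update_of_ne hw.1, hf.1 w hw.2]
  have hxleave : ∃ n, (update f x z)^[n] x ∉ insert x X :=
    ⟨1, by rwa [iterate_one, update_self]⟩
  have key (m : ℕ) : ∀ w, f^[m] w ∉ X → ∃ n, (update f x z)^[n] w ∉ insert x X := by
    induction m with
    | zero =>
      intro w hw
      by_cases hwx : w = x
      · exact hwx ▸ hxleave
      · exact ⟨0, by simpa [hwx] using hw⟩
    | succ m ih =>
      intro w hw
      by_cases hwx : w = x
      · exact hwx ▸ hxleave
      · obtain ⟨n, hn⟩ := ih (f w) (by rwa [← iterate_succ_apply])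
        exact ⟨n + 1, by rwa [iterate_succ_apply, update_of_ne hwx]⟩
  obtain ⟨m, hm⟩ := hf.2 w
  exact key m w hm

lemma exists_edge_of_reflTransGen {R : S → S → Prop} {X : Finset S} {x z : S} (hx : x ∈ X)
    (hz : z ∉ X) (h : ReflTransGen R x z) : ∃ u ∈ X, ∃ v ∉ X, R u v := by
  induction h with
  | refl => exact absurd hx hz
  | @tail b c _ hbc ih =>
    by_cases hb : b ∈ X
    · exact ⟨b, hb, c, hz, hbc⟩
    · exact ih hb

lemma exists_isForest [DecidableEq S] {R : S → S → Prop} (X : Finset S)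
    (h : ∀ x ∈ X, ∃ z ∉ X, ReflTransGen R x z) : ∃ f, IsForest X f ∧ ∀ x ∈ X, R x (f x) := by
  induction X using Finset.strongInduction with
  | H X ih =>
  rcases X.eq_empty_or_nonempty with rfl | ⟨x₀, hx₀⟩
  · exact ⟨id, ⟨fun _ _ => rfl, fun x => ⟨0, notMem_empty x⟩⟩, by simp⟩
  -- attach an edge leaving `X` to a forest on `X` minus the source of that edge
  obtain ⟨z₀, hz₀, hpath⟩ := h x₀ hx₀
  obtain ⟨x, hx, z, hz, hxz⟩ := exists_edge_of_reflTransGen hx₀ hz₀ hpath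
  obtain ⟨f, hf, hfR⟩ := ih (X.erase x) (erase_ssubset hx) fun w hw => by
    obtain ⟨z', hz', hp⟩ := h w (mem_of_mem_erase hw)
    exact ⟨z', fun h' => hz' (mem_of_mem_erase h'), hp⟩
  refine ⟨update f x z, insert_erase hx ▸ isForest_insert hf (by rwa [insert_erase hx]),
    fun w hw => ?_⟩
  by_cases hwx : w = x
  · subst hwx
    rwa [update_self]
  · rw [update_of_ne hwx]
    exact hfR w (mem_erase.2 ⟨hwx, hw⟩)

variable {ι : Type*} {κ : S → ι → S → ℝ} {X : Finset S} {t : S}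

variable (κ X) in
/-- The weight of a spanning forest on `X` whose edge `x → i.1 x` carries the label `i.2 x`. -/
noncomputable def forestWeight (i : (S → S) × (X → ι)) : ℝ :=
  ∏ x : X, κ x (i.2 x) (i.1 x)

lemma forestWeight_nonneg (hκ : ∀ x a y, 0 ≤ κ x a y) (X : Finset S) (i : (S → S) × (X → ι)) :
    0 ≤ forestWeight κ X i :=
  prod_nonneg fun _ _ => hκ _ _ _

lemma forestWeight_update [DecidableEq S] {x : S} (hx : x ∈ X) (f : S → S) (ℓ : X → ι) (y : S)
    (a : ι) : κ x a y * forestWeight κ X (f, ℓ) =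
      κ x (ℓ ⟨x, hx⟩) (f x) * forestWeight κ X (update f x y, update ℓ ⟨x, hx⟩ a) := by
  simp only [forestWeight, ← mul_prod_erase univ _ (mem_univ (⟨x, hx⟩ : X))]
  have hrest : ∀ z ∈ univ.erase (⟨x, hx⟩ : X),
      κ z (update ℓ ⟨x, hx⟩ a z) (update f x y z) = κ z (ℓ z) (f z) := fun z hz => by
    have hzx : z ≠ ⟨x, hx⟩ := ne_of_mem_erase hz
    rw [update_of_ne hzx, update_of_ne (fun h => hzx (Subtype.ext h))]
  rw [prod_congr rfl hrest]
  simp only [update_self]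
  ring

/-- The re-rooting map of the Markov chain tree theorem: the edge `x → y` labelled `a` replaces
the edge leaving `x` in the forest, which is returned in its place. -/
def reroot [DecidableEq S] (x : S) (hx : x ∈ X) (p : ((S → S) × (X → ι)) × (S × ι)) :
    ((S → S) × (X → ι)) × (S × ι) :=
  ((update p.1.1 x p.2.1, update p.1.2 ⟨x, hx⟩ p.2.2), (p.1.1 x, p.1.2 ⟨x, hx⟩))

lemma reroot_reroot [DecidableEq S] {x : S} (hx : x ∈ X) (p : ((S → S) × (X → ι)) × (S × ι)) :
    reroot x hx (reroot x hx p) = p := by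
  simp [reroot]

variable [Fintype S] [DecidableEq S] [Fintype ι]

variable (ι X) in
open scoped Classical in
noncomputable def labelledForests : Finset ((S → S) × (X → ι)) :=
  univ.filter fun i => IsForest X i.1

variable (κ X) in
noncomputable def forestSum : ℝ :=
  ∑ i ∈ labelledForests ι X, forestWeight κ X i

variable (κ X t) in
open scoped Classical in
noncomputable def forestSumReaching (y : S) : ℝ :=
  ∑ i ∈ (labelledForests ι X).filter (fun i => ∃ n, i.1^[n] y = t), forestWeight κ X i

variable (κ X t) in
open scoped Classical in
noncomputable def forestSumAvoiding (y : S) : ℝ :=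
  ∑ i ∈ (labelledForests ι X).filter (fun i => ¬ ∃ n, i.1^[n] y = t), forestWeight κ X i

lemma forestSum_nonneg (hκ : ∀ x a y, 0 ≤ κ x a y) : 0 ≤ forestSum κ X :=
  sum_nonneg fun i _ => forestWeight_nonneg hκ X i

lemma forestSumReaching_add_forestSumAvoiding (y : S) :
    forestSumReaching κ X t y + forestSumAvoiding κ X t y = forestSum κ X := by
  classical
  exact sum_filter_add_sum_filter_not _ _ _

lemma forestSumReaching_self : forestSumReaching κ X t t = forestSum κ X := by
  classical
  rw [forestSumReaching, filter_true_of_mem fun i _ => ⟨0, rfl⟩, forestSum]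

lemma forestSumReaching_eq_zero {y : S} (hy : y ∉ X) (hyt : y ≠ t) :
    forestSumReaching κ X t y = 0 := by
  classical
  refine sum_eq_zero fun i hi => ?_
  obtain ⟨hi, n, hn⟩ := mem_filter.1 hi
  have hf : IsForest X i.1 := (mem_filter.1 hi).2
  exact absurd (iterate_fixed (hf.1 y hy) n ▸ hn) hyt

open scoped Classical in
/-- `reroot` is a weight-preserving bijection between the two index sets. -/
lemma sum_reaching_eq_sum_reaching_of_not_reaches {x : S} (hx : x ∈ X) (ht : t ∉ X) :
    ∑ p ∈ labelledForests ι X ×ˢ (univ : Finset (S × ι)) with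
        (∃ n, p.1.1^[n] x = t) ∧ ¬ ∃ n, p.1.1^[n] p.2.1 = x,
      κ x p.2.2 p.2.1 * forestWeight κ X p.1 =
    ∑ p ∈ labelledForests ι X ×ˢ (univ : Finset (S × ι)) with
        (∃ n, p.1.1^[n] p.2.1 = t) ∧ ¬ ∃ n, p.1.1^[n] p.2.1 = x,
      κ x p.2.2 p.2.1 * forestWeight κ X p.1 := by
  have hxt : x ≠ t := fun h => ht (h ▸ hx)
  have hT {p : ((S → S) × (X → ι)) × (S × ι)} (hp : p ∈ labelledForests ι X ×ˢ univ) :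
      IsForest X p.1.1 :=
    (mem_filter.1 (mem_product.1 hp).1).2
  have hmem {p} (hp : p ∈ labelledForests ι X ×ˢ univ) (hbad : ¬ ∃ n, p.1.1^[n] p.2.1 = x) :
      reroot x hx p ∈ labelledForests ι X ×ˢ univ ∧
        ¬ ∃ n, (reroot x hx p).1.1^[n] (reroot x hx p).2.1 = x := by
    have hf := hT hp
    refine ⟨mem_product.2 ⟨mem_filter.2 ⟨mem_univ _, hf.update hx (not_exists.1 hbad)⟩,
      mem_univ _⟩, ?_⟩
    rintro ⟨n, hn⟩
    simp only [reroot, iterate_update_of_forall_ne (hf.iterate_ne_self hx)] at hn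
    exact hf.iterate_ne_self hx n hn
  refine sum_nbij' (reroot x hx) (reroot x hx) ?_ ?_ (fun p _ => reroot_reroot hx p)
    (fun p _ => reroot_reroot hx p) fun p _ => forestWeight_update hx _ _ _ _
  · simp only [mem_filter]
    rintro p ⟨hp, hreach, hbad⟩
    exact ⟨(hmem hp hbad).1, ((hT hp).reaches_parent_update_iff hx hxt _).2 hreach,
      (hmem hp hbad).2⟩
  · simp only [mem_filter]
    rintro p ⟨hp, hreach, hbad⟩
    exact ⟨(hmem hp hbad).1, (exists_iterate_update_self_eq_iff hxt (not_exists.1 hbad)).2 hreach,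
      (hmem hp hbad).2⟩

/-- The Markov chain tree theorem, in the form of the first-step equation for the forests
in which `t` is reached. -/
theorem rowSum_mul_forestSumReaching {x : S} (hx : x ∈ X) (ht : t ∉ X) :
    (∑ a, ∑ y, κ x a y) * forestSumReaching κ X t x =
      ∑ y, (∑ a, κ x a y) * forestSumReaching κ X t y := by
  classical
  set g : ((S → S) × (X → ι)) × (S × ι) → ℝ := fun p => κ x p.2.2 p.2.1 * forestWeight κ X p.1
  have hL : (∑ a, ∑ y, κ x a y) * forestSumReaching κ X t x =
      ∑ p ∈ labelledForests ι X ×ˢ univ with ∃ n, p.1.1^[n] x = t, g p := by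
    rw [filter_product_left fun i : (S → S) × (X → ι) => ∃ n, i.1^[n] x = t, sum_product,
      forestSumReaching, mul_sum]
    refine sum_congr rfl fun i _ => ?_
    rw [Fintype.sum_prod_type, sum_comm, sum_mul]
    simp only [g, sum_mul]
  have hR : ∑ y, (∑ a, κ x a y) * forestSumReaching κ X t y =
      ∑ p ∈ labelledForests ι X ×ˢ univ with ∃ n, p.1.1^[n] p.2.1 = t, g p := by
    rw [sum_filter, sum_product, sum_comm, Fintype.sum_prod_type]
    refine sum_congr rfl fun y _ => ?_
    simp only [forestSumReaching, sum_filter, sum_mul, mul_sum, g, mul_ite, mul_zero]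
    rw [sum_comm]
    refine sum_congr rfl fun i _ => ?_
    split_ifs <;> simp
  have hsplit (P : ((S → S) × (X → ι)) × (S × ι) → Prop) :
      ∑ p ∈ labelledForests ι X ×ˢ univ with P p, g p =
        ∑ p ∈ labelledForests ι X ×ˢ univ with P p ∧ ∃ n, p.1.1^[n] p.2.1 = x, g p +
          ∑ p ∈ labelledForests ι X ×ˢ univ with P p ∧ ¬ ∃ n, p.1.1^[n] p.2.1 = x, g p := by
    rw [← filter_filter, ← filter_filter, sum_filter_add_sum_filter_not]
  rw [hL, hR, hsplit fun p => ∃ n, p.1.1^[n] x = t, hsplit fun p => ∃ n, p.1.1^[n] p.2.1 = t,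
    sum_reaching_eq_sum_reaching_of_not_reaches hx ht]
  congr 1
  -- if `y` reaches `x`, then `y` reaches `t` iff `x` does
  refine sum_congr (filter_congr fun p hp => ?_) fun _ _ => rfl
  have hf : IsForest X p.1.1 := (mem_filter.1 (mem_product.1 hp).1).2
  exact ⟨fun ⟨hxr, m, hm⟩ => ⟨(hf.reaches_iff_of_reaches hx ht hm).2 hxr, m, hm⟩,
    fun ⟨hyr, m, hm⟩ => ⟨(hf.reaches_iff_of_reaches hx ht hm).1 hyr, m, hm⟩⟩

end Forest

section Policy

open scoped Classical

variable {S A : Type*} {δ : S → A → S → ℝ} {σ : A → ℝ} {B : Finset A} {X : Finset S} {t : S}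

variable (δ σ) in
def policyKernel : S → A → S → ℝ := fun x a y => σ a * δ x a y

variable (δ B) in
def supportGraph (x y : S) : Prop := ∃ a ∈ B, 0 < δ x a y

lemma forestWeight_policyKernel (i : (S → S) × (X → A)) :
    forestWeight (policyKernel δ σ) X i = (∏ x, σ (i.2 x)) * forestWeight δ X i :=
  prod_mul_distrib

variable [Fintype S]

variable (δ B t) in
noncomputable def transientStates : Finset S :=
  univ.filter fun x => x ≠ t ∧ ReflTransGen (supportGraph δ B) x t

lemma mem_transientStates {x : S} :
    x ∈ transientStates δ B t ↔ x ≠ t ∧ ReflTransGen (supportGraph δ B) x t := by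
  simp [transientStates]

variable [Fintype A]

variable (δ σ) in
noncomputable def policyMatrix : S → S → ℝ := fun x y => ∑ a, σ a * δ x a y

lemma policyMatrix_pos_iff (hδ : ∀ s a, δ s a ∈ stdSimplex ℝ S) (hσ : σ ∈ stdSimplex ℝ A)
    (hB : ∀ a, 0 < σ a ↔ a ∈ B) (x y : S) :
    0 < policyMatrix δ σ x y ↔ supportGraph δ B x y := by
  rw [policyMatrix, sum_pos_iff_of_nonneg fun a _ => mul_nonneg (hσ.1 a) ((hδ x a).1 y)]
  simp only [mem_univ, true_and, supportGraph, ← hB]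
  refine exists_congr fun a => ⟨fun h => ?_, fun h => mul_pos h.1 h.2⟩
  rcases mul_pos_iff.1 h with h | h
  · exact h
  · exact absurd h.1 (hσ.1 a).not_gt

lemma forestWeight_policyKernel_eq_zero (hδ : ∀ s a, δ s a ∈ stdSimplex ℝ S)
    (hσ : σ ∈ stdSimplex ℝ A) (hB : ∀ a, 0 < σ a ↔ a ∈ B) {i : (S → S) × (X → A)}
    (hi : ¬ ∀ x, i.2 x ∈ B ∧ 0 < δ x (i.2 x) (i.1 x)) :
    forestWeight (policyKernel δ σ) X i = 0 := by
  push Not at hi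
  obtain ⟨x, hx⟩ := hi
  refine prod_eq_zero (mem_univ x) ?_
  simp only [policyKernel]
  by_cases hxB : i.2 x ∈ B
  · rw [le_antisymm (hx hxB) ((hδ _ _).1 _), mul_zero]
  · rw [le_antisymm (not_lt.1 (mt (hB _).1 hxB)) (hσ.1 _), zero_mul]

variable [DecidableEq S]

lemma policyMatrix_mem_rowStochastic (hδ : ∀ s a, δ s a ∈ stdSimplex ℝ S)
    (hσ : σ ∈ stdSimplex ℝ A) : policyMatrix δ σ ∈ Matrix.rowStochastic ℝ S := by
  refine Matrix.mem_rowStochastic_iff_sum.2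
    ⟨fun x y => sum_nonneg fun a _ => mul_nonneg (hσ.1 a) ((hδ x a).1 y), fun x => ?_⟩
  simp only [policyMatrix]
  rw [sum_comm]
  simp only [← mul_sum, (hδ x _).2, mul_one, hσ.2]

variable (δ B X) in
noncomputable def supportForests : Finset ((S → S) × (X → A)) :=
  (labelledForests A X).filter fun i => ∀ x, i.2 x ∈ B ∧ 0 < δ x (i.2 x) (i.1 x)

lemma forestWeight_pos_of_mem_supportForests {i : (S → S) × (X → A)}
    (hi : i ∈ supportForests δ B X) : 0 < forestWeight δ X i :=
  prod_pos fun x _ => ((mem_filter.1 hi).2 x).2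

lemma forestWeight_policyKernel_pos (hB : ∀ a, 0 < σ a ↔ a ∈ B) {i : (S → S) × (X → A)}
    (hi : i ∈ supportForests δ B X) : 0 < forestWeight (policyKernel δ σ) X i :=
  prod_pos fun x _ => mul_pos ((hB _).2 ((mem_filter.1 hi).2 x).1) ((mem_filter.1 hi).2 x).2

lemma forestSum_policyKernel (hδ : ∀ s a, δ s a ∈ stdSimplex ℝ S) (hσ : σ ∈ stdSimplex ℝ A)
    (hB : ∀ a, 0 < σ a ↔ a ∈ B) :
    forestSum (policyKernel δ σ) X =
      ∑ i ∈ supportForests δ B X, forestWeight (policyKernel δ σ) X i :=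
  (sum_subset (filter_subset _ _) fun _ hi hi' =>
    forestWeight_policyKernel_eq_zero hδ hσ hB fun h => hi' (mem_filter.2 ⟨hi, h⟩)).symm

lemma forestSumAvoiding_policyKernel (hδ : ∀ s a, δ s a ∈ stdSimplex ℝ S)
    (hσ : σ ∈ stdSimplex ℝ A) (hB : ∀ a, 0 < σ a ↔ a ∈ B) (s : S) :
    forestSumAvoiding (policyKernel δ σ) X t s =
      ∑ i ∈ (supportForests δ B X).filter (fun i => ¬ ∃ n, i.1^[n] s = t),
        forestWeight (policyKernel δ σ) X i := by
  refine (sum_subset (fun i hi => ?_) fun i hi hi' => ?_).symm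
  · simp only [supportForests, mem_filter] at hi ⊢
    exact ⟨hi.1.1, hi.2⟩
  · refine forestWeight_policyKernel_eq_zero hδ hσ hB fun h => hi' ?_
    simp only [supportForests, mem_filter] at hi ⊢
    exact ⟨⟨hi.1, h⟩, hi.2⟩

lemma supportForests_nonempty (h : ∀ x ∈ X, ∃ z ∉ X, ReflTransGen (supportGraph δ B) x z) :
    (supportForests δ B X).Nonempty := by
  obtain ⟨f, hf, hfR⟩ := exists_isForest X h
  choose ℓ hℓB hℓ using fun x : X => hfR x x.2
  exact ⟨(f, ℓ), mem_filter.2 ⟨mem_filter.2 ⟨mem_univ _, hf⟩, fun x => ⟨hℓB x, hℓ x⟩⟩⟩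

lemma supportForests_transientStates_nonempty :
    (supportForests δ B (transientStates δ B t)).Nonempty :=
  supportForests_nonempty fun _ hx =>
    ⟨t, fun ht => (mem_transientStates.1 ht).1 rfl, (mem_transientStates.1 hx).2⟩

lemma forestSum_policyKernel_pos (hδ : ∀ s a, δ s a ∈ stdSimplex ℝ S)
    (hσ : σ ∈ stdSimplex ℝ A) (hB : ∀ a, 0 < σ a ↔ a ∈ B) :
    0 < forestSum (policyKernel δ σ) (transientStates δ B t) := by
  rw [forestSum_policyKernel hδ hσ hB]
  exact sum_pos (fun j hj => forestWeight_policyKernel_pos hB hj)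
    supportForests_transientStates_nonempty

/-- The Markov chain tree theorem for the chain induced by a memoryless policy. -/
theorem reachProb_policyMatrix (hδ : ∀ s a, δ s a ∈ stdSimplex ℝ S) (hσ : σ ∈ stdSimplex ℝ A)
    (hB : ∀ a, 0 < σ a ↔ a ∈ B) (x : S) :
    ReachProb (policyMatrix δ σ) t x =
      forestSumReaching (policyKernel δ σ) (transientStates δ B t) t x /
        forestSum (policyKernel δ σ) (transientStates δ B t) := by
  have hP := policyMatrix_mem_rowStochastic hδ hσ
  set G := forestSum (policyKernel δ σ) (transientStates δ B t)
  have hgraph : (fun x y => 0 < policyMatrix δ σ x y) = supportGraph δ B := by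
    ext x y
    exact policyMatrix_pos_iff hδ hσ hB x y
  refine reachProb_eq_of_harmonic hP
    (v := fun x => forestSumReaching (policyKernel δ σ) (transientStates δ B t) t x / G)
    ?_ (fun y hy => ?_) (fun y hyt hy => ?_) x
  · rw [forestSumReaching_self, div_self (forestSum_policyKernel_pos hδ hσ hB).ne']
  · rw [hgraph] at hy
    rw [forestSumReaching_eq_zero (fun h => hy (mem_transientStates.1 h).2)
      fun h => hy (h ▸ .refl), zero_div]
  · rw [hgraph] at hy
    have hrow : ∑ a, ∑ y', policyKernel δ σ y a y' = 1 := by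
      simpa [policyMatrix, policyKernel, sum_comm (γ := A)] using
        Matrix.sum_row_of_mem_rowStochastic hP y
    have := rowSum_mul_forestSumReaching (κ := policyKernel δ σ)
      (mem_transientStates.2 ⟨hyt, hy⟩) fun h => (mem_transientStates.1 h).1 rfl
    rw [hrow, one_mul] at this
    rw [this, sum_div]
    exact sum_congr rfl fun y' _ => mul_div_assoc _ _ _

lemma reachProb_policyMatrix_eq_one_sub (hδ : ∀ s a, δ s a ∈ stdSimplex ℝ S)
    (hσ : σ ∈ stdSimplex ℝ A) (hB : ∀ a, 0 < σ a ↔ a ∈ B) (x : S) :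
    ReachProb (policyMatrix δ σ) t x =
      1 - forestSumAvoiding (policyKernel δ σ) (transientStates δ B t) t x /
        forestSum (policyKernel δ σ) (transientStates δ B t) := by
  rw [reachProb_policyMatrix hδ hσ hB, eq_sub_iff_add_eq, ← add_div,
    forestSumReaching_add_forestSumAvoiding, div_self (forestSum_policyKernel_pos hδ hσ hB).ne']

end Policy

section RankPolicy

variable {A : Type*} {r : A → Option ℕ} {ε : ℝ}

open scoped Classical in
lemma rankWeight_ite {B : Finset A} {L : A → ℕ} {a : A} (ha : a ∈ B) :
    rankWeight (fun a => if a ∈ B then some (L a) else none) a ε = ε ^ L a := by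
  simp [rankWeight, ha]

noncomputable def rankPolicy [Fintype A] (r : A → Option ℕ) (ε : ℝ) (a : A) : ℝ :=
  rankWeight r a ε / ∑ a', rankWeight r a' ε

lemma rankWeight_nonneg (hε : 0 ≤ ε) (a : A) : 0 ≤ rankWeight r a ε := by
  unfold rankWeight
  split
  · exact pow_nonneg hε _
  · exact le_rfl

lemma rankWeight_pos_iff (hε : 0 < ε) {a : A} : 0 < rankWeight r a ε ↔ r a ≠ none := by
  unfold rankWeight
  split <;> simp [pow_pos hε, *]

lemma sum_rankWeight_pos [Fintype A] (hr : ∃ a, r a ≠ none) (hε : 0 < ε) :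
    0 < ∑ a, rankWeight r a ε :=
  let ⟨a, ha⟩ := hr
  sum_pos' (fun a _ => rankWeight_nonneg hε.le a) ⟨a, mem_univ a, (rankWeight_pos_iff hε).2 ha⟩

lemma rankPolicy_mem_stdSimplex [Fintype A] (hr : ∃ a, r a ≠ none) (hε : 0 < ε) :
    rankPolicy r ε ∈ stdSimplex ℝ A :=
  ⟨fun a => div_nonneg (rankWeight_nonneg hε.le a) (sum_rankWeight_pos hr hε).le, by
    simp only [rankPolicy]
    rw [← sum_div, div_self (sum_rankWeight_pos hr hε).ne']⟩

lemma rankPolicy_pos_iff [Fintype A] (hr : ∃ a, r a ≠ none) (hε : 0 < ε) {a : A} :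
    0 < rankPolicy r ε a ↔ r a ≠ none := by
  rw [rankPolicy, div_pos_iff_of_pos_right (sum_rankWeight_pos hr hε), rankWeight_pos_iff hε]

end RankPolicy

lemma sum_natCeil_lt_sum_natCeil {κ : Type*} [Fintype κ] {v w : κ → ℝ} (hv : ∀ k, 0 ≤ v k)
    (h : ∑ k, v k + 1 < ∑ k, w k) :
    ∑ k, ⌈(Fintype.card κ + 1) * v k⌉₊ < ∑ k, ⌈(Fintype.card κ + 1) * w k⌉₊ := by
  set c : ℝ := Fintype.card κ + 1
  have hc : 0 < c := by positivity
  have hv' : (∑ k, ⌈c * v k⌉₊ : ℝ) ≤ c * ∑ k, v k + Fintype.card κ := by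
    calc (∑ k, ⌈c * v k⌉₊ : ℝ) ≤ ∑ k, (c * v k + 1) :=
          sum_le_sum fun k _ => (Nat.ceil_lt_add_one (mul_nonneg hc.le (hv k))).le
      _ = c * ∑ k, v k + Fintype.card κ := by simp [sum_add_distrib, mul_sum]
  have hw' : c * ∑ k, w k ≤ ∑ k, (⌈c * w k⌉₊ : ℝ) := by
    rw [mul_sum]
    exact sum_le_sum fun k _ => Nat.le_ceil _
  have := mul_lt_mul_of_pos_left h hc
  rw [mul_add, mul_one] at this
  have key : ((∑ k, ⌈c * v k⌉₊ : ℕ) : ℝ) < ((∑ k, ⌈c * w k⌉₊ : ℕ) : ℝ) := by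
    push_cast
    linarith
  exact_mod_cast key

lemma sum_natCeil_log_lt {A κ : Type*} [Fintype κ] {σ : A → ℝ} (hσ : ∀ a, σ a ≤ 1)
    {ℓ ℓ' : κ → A} (hℓ : ∀ k, 0 < σ (ℓ k)) (hℓ' : ∀ k, 0 < σ (ℓ' k))
    (h : Real.exp 1 * ∏ k, σ (ℓ' k) < ∏ k, σ (ℓ k)) :
    ∑ k, ⌈(Fintype.card κ + 1) * -Real.log (σ (ℓ k))⌉₊ <
      ∑ k, ⌈(Fintype.card κ + 1) * -Real.log (σ (ℓ' k))⌉₊ := by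
  refine sum_natCeil_lt_sum_natCeil (fun k => neg_nonneg.2 (Real.log_nonpos (hℓ k).le (hσ _))) ?_
  have := Real.log_lt_log (mul_pos (Real.exp_pos 1) (prod_pos fun k _ => hℓ' k)) h
  rw [Real.log_mul (Real.exp_pos 1).ne' (prod_pos fun k _ => hℓ' k).ne', Real.log_exp,
    Real.log_prod fun k _ => (hℓ' k).ne', Real.log_prod fun k _ => (hℓ k).ne'] at this
  simp only [sum_neg_distrib]
  linarith

section LimitSure

open scoped Classical

variable {S A : Type*} [Fintype S] [DecidableEq S] [Fintype A]
  {δ : S → A → S → ℝ} {σ : A → ℝ} {B : Finset A} {X : Finset S} {t : S}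

/-- The largest monomial works: the total weight is at most that monomial times the total
`δ`-weight, while the weight avoiding `t` is at least the monomial of any of its forests times
the `δ`-weight of that forest. -/
lemma exists_monomial_gap (hδ : ∀ s a, δ s a ∈ stdSimplex ℝ S) (hσ : σ ∈ stdSimplex ℝ A)
    (hB : ∀ a, 0 < σ a ↔ a ∈ B) (hX : (supportForests δ B X).Nonempty) {η : ℝ}
    (hη : ∀ j ∈ supportForests δ B X,
      η * (Real.exp 1 * ∑ k ∈ supportForests δ B X, forestWeight δ X k) ≤ forestWeight δ X j)
    {s : S} (hsmall : forestSumAvoiding (policyKernel δ σ) X t s <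
      η * forestSum (policyKernel δ σ) X) :
    ∃ j ∈ supportForests δ B X, ∀ i ∈ (supportForests δ B X).filter (¬ ∃ n, ·.1^[n] s = t),
      Real.exp 1 * ∏ x, σ (i.2 x) < ∏ x, σ (j.2 x) := by
  have hδ0 : ∀ x a y, 0 ≤ δ x a y := fun x a y => (hδ x a).1 y
  have hκ0 : ∀ x a y, 0 ≤ policyKernel δ σ x a y := fun x a y => mul_nonneg (hσ.1 a) (hδ0 x a y)
  have hm0 (i : (S → S) × (X → A)) : 0 ≤ ∏ x, σ (i.2 x) := prod_nonneg fun x _ => hσ.1 _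
  obtain ⟨j, hj, hjmax⟩ := exists_max_image _ (fun i => ∏ x, σ (i.2 x)) hX
  refine ⟨j, hj, fun i hi => ?_⟩
  have hiX := (mem_filter.1 hi).1
  have hci := forestWeight_pos_of_mem_supportForests hiX
  have hH : (∏ x, σ (i.2 x)) * forestWeight δ X i ≤
      forestSumAvoiding (policyKernel δ σ) X t s := by
    rw [forestSumAvoiding_policyKernel hδ hσ hB, ← forestWeight_policyKernel]
    exact single_le_sum (fun k _ => forestWeight_nonneg hκ0 X k) hi
  have hG : forestSum (policyKernel δ σ) X ≤
      (∏ x, σ (j.2 x)) * ∑ k ∈ supportForests δ B X, forestWeight δ X k := by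
    rw [forestSum_policyKernel hδ hσ hB, mul_sum]
    exact sum_le_sum fun k hk => by
      rw [forestWeight_policyKernel]
      exact mul_le_mul_of_nonneg_right (hjmax k hk) (forestWeight_nonneg hδ0 X k)
  have hη0 : 0 ≤ η := by
    by_contra! h
    nlinarith [mul_nonneg (hm0 i) hci.le, forestSum_nonneg hκ0 (X := X)]
  refine lt_of_mul_lt_mul_right ?_ hci.le
  calc Real.exp 1 * (∏ x, σ (i.2 x)) * forestWeight δ X i
      ≤ Real.exp 1 * forestSumAvoiding (policyKernel δ σ) X t s := by
        rw [mul_assoc]; exact mul_le_mul_of_nonneg_left hH (Real.exp_pos 1).le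
    _ < Real.exp 1 * (η * forestSum (policyKernel δ σ) X) :=
        mul_lt_mul_of_pos_left hsmall (Real.exp_pos 1)
    _ ≤ Real.exp 1 * (η * ((∏ x, σ (j.2 x)) *
          ∑ k ∈ supportForests δ B X, forestWeight δ X k)) := by gcongr
    _ = (∏ x, σ (j.2 x)) *
          (η * (Real.exp 1 * ∑ k ∈ supportForests δ B X, forestWeight δ X k)) := by ring
    _ ≤ (∏ x, σ (j.2 x)) * forestWeight δ X i := mul_le_mul_of_nonneg_left (hη i hiX) (hm0 j)

lemma forestWeight_rankPolicy {L : A → ℕ} {i : (S → S) × (X → A)}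
    (hi : i ∈ supportForests δ B X) (ε : ℝ) :
    forestWeight (policyKernel δ (rankPolicy (fun a => if a ∈ B then some (L a) else none) ε)) X i =
      ε ^ (∑ x, L (i.2 x)) /
        (∑ a, rankWeight (fun a => if a ∈ B then some (L a) else none) a ε) ^ Fintype.card X *
        forestWeight δ X i := by
  rw [forestWeight_policyKernel]
  simp only [rankPolicy, rankWeight_ite ((mem_filter.1 hi).2 _).1, prod_div_distrib,
    prod_pow_eq_pow_sum, prod_const, card_univ]

lemma forestSumAvoiding_div_forestSum_le (hδ : ∀ s a, δ s a ∈ stdSimplex ℝ S) (hB : B.Nonempty)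
    {L : A → ℕ} {j : (S → S) × (X → A)} (hj : j ∈ supportForests δ B X) {s : S}
    (hgap : ∀ i ∈ (supportForests δ B X).filter (¬ ∃ n, ·.1^[n] s = t),
      ∑ x, L (j.2 x) < ∑ x, L (i.2 x)) {ε : ℝ} (hε0 : 0 < ε) (hε1 : ε < 1) :
    let σ := rankPolicy (fun a => if a ∈ B then some (L a) else none) ε
    forestSumAvoiding (policyKernel δ σ) X t s / forestSum (policyKernel δ σ) X ≤
      (∑ i ∈ (supportForests δ B X).filter (¬ ∃ n, ·.1^[n] s = t), forestWeight δ X i) /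
        forestWeight δ X j * ε := by
  intro σ
  set r : A → Option ℕ := fun a => if a ∈ B then some (L a) else none
  have hr : ∃ a, r a ≠ none := hB.imp fun b hb => by simp [r, hb]
  have hδ0 : ∀ x a y, 0 ≤ δ x a y := fun x a y => (hδ x a).1 y
  have hσ := rankPolicy_mem_stdSimplex hr hε0
  have hσB (a : A) : 0 < σ a ↔ a ∈ B :=
    (rankPolicy_pos_iff hr hε0).trans (by by_cases ha : a ∈ B <;> simp [r, ha])
  set SH := (supportForests δ B X).filter (¬ ∃ n, ·.1^[n] s = t)
  set N : (S → S) × (X → A) → ℕ := fun i => ∑ x, L (i.2 x)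
  set W := ∑ a, rankWeight r a ε
  have hW : 0 < W := sum_rankWeight_pos hr hε0
  have hH : forestSumAvoiding (policyKernel δ σ) X t s ≤
      ε ^ (N j + 1) / W ^ Fintype.card X * ∑ i ∈ SH, forestWeight δ X i := by
    rw [forestSumAvoiding_policyKernel hδ hσ hσB, mul_sum]
    refine sum_le_sum fun i hi => ?_
    rw [forestWeight_rankPolicy (mem_filter.1 hi).1]
    have := pow_le_pow_of_le_one hε0.le hε1.le (hgap i hi)
    gcongr
    exact forestWeight_nonneg hδ0 X i
  have hG : ε ^ N j / W ^ Fintype.card X * forestWeight δ X j ≤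
      forestSum (policyKernel δ σ) X := by
    rw [forestSum_policyKernel hδ hσ hσB, ← forestWeight_rankPolicy hj]
    exact single_le_sum (fun k _ => forestWeight_nonneg
      (fun x a y => mul_nonneg (hσ.1 a) (hδ0 x a y)) X k) hj
  have hcj := forestWeight_pos_of_mem_supportForests hj
  calc _ ≤ ε ^ (N j + 1) / W ^ Fintype.card X * (∑ i ∈ SH, forestWeight δ X i) /
        (ε ^ N j / W ^ Fintype.card X * forestWeight δ X j) :=
        div_le_div₀ (mul_nonneg (by positivity)
          (sum_nonneg fun i _ => forestWeight_nonneg hδ0 X i)) hH (by positivity) hG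
    _ = _ := by
      field_simp
      ring

theorem tendsto_reachProb_rankPolicy (hδ : ∀ s a, δ s a ∈ stdSimplex ℝ S) (hB : B.Nonempty)
    {L : A → ℕ} {j : (S → S) × (transientStates δ B t → A)}
    (hj : j ∈ supportForests δ B (transientStates δ B t)) {s : S}
    (hgap : ∀ i ∈ (supportForests δ B (transientStates δ B t)).filter (¬ ∃ n, ·.1^[n] s = t),
      ∑ x, L (j.2 x) < ∑ x, L (i.2 x)) :
    Tendsto (fun ε => ReachProb
        (policyMatrix δ (rankPolicy (fun a => if a ∈ B then some (L a) else none) ε)) t s)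
      (𝓝[>] 0) (𝓝 1) := by
  have hr : ∃ a, (if a ∈ B then some (L a) else none) ≠ none := hB.imp fun b hb => by simp [hb]
  have hrB (a : A) : (if a ∈ B then some (L a) else none) ≠ none ↔ a ∈ B := by
    by_cases ha : a ∈ B <;> simp [ha]
  set K := (∑ i ∈ (supportForests δ B (transientStates δ B t)).filter (¬ ∃ n, ·.1^[n] s = t),
    forestWeight δ _ i) / forestWeight δ _ j
  have hlower : ∀ ε ∈ Set.Ioo (0 : ℝ) 1, 1 - K * ε ≤ ReachProb
      (policyMatrix δ (rankPolicy (fun a => if a ∈ B then some (L a) else none) ε)) t s := by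
    rintro ε ⟨hε0, hε1⟩
    rw [reachProb_policyMatrix_eq_one_sub hδ (rankPolicy_mem_stdSimplex hr hε0)
      fun a => (rankPolicy_pos_iff hr hε0).trans (hrB a)]
    linarith [forestSumAvoiding_div_forestSum_le hδ hB hj hgap hε0 hε1]
  have hupper : ∀ ε ∈ Set.Ioi (0 : ℝ), ReachProb
      (policyMatrix δ (rankPolicy (fun a => if a ∈ B then some (L a) else none) ε)) t s ≤ 1 :=
    fun ε hε => reachProb_le_one
      (policyMatrix_mem_rowStochastic hδ (rankPolicy_mem_stdSimplex hr hε)) s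
  have hline : Tendsto (fun ε : ℝ => 1 - K * ε) (𝓝[>] 0) (𝓝 1) :=
    ((continuous_const.sub (continuous_const_mul K)).tendsto' 0 1 (by simp)).mono_left
      nhdsWithin_le_nhds
  exact tendsto_of_tendsto_of_tendsto_of_le_of_le' hline tendsto_const_nhds
    (eventually_of_mem (Ioo_mem_nhdsGT one_pos) hlower)
    (eventually_of_mem self_mem_nhdsWithin hupper)

theorem exists_rank_witness_of_near_one (hδ : ∀ s a, δ s a ∈ stdSimplex ℝ S) (B : Finset A)
    (s : S) : ∃ η > 0, ∀ σ ∈ stdSimplex ℝ A, (∀ a, 0 < σ a ↔ a ∈ B) →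
      1 - η < ReachProb (policyMatrix δ σ) t s →
      ∃ r : A → Option ℕ, (∃ a, r a ≠ none) ∧
        Tendsto (fun ε => ReachProb (policyMatrix δ (rankPolicy r ε)) t s) (𝓝[>] 0) (𝓝 1) := by
  have hX := supportForests_transientStates_nonempty (δ := δ) (B := B) (t := t)
  have hc : ∀ j ∈ supportForests δ B (transientStates δ B t), 0 < forestWeight δ _ j :=
    fun _ => forestWeight_pos_of_mem_supportForests
  obtain ⟨j₀, hj₀, hmin⟩ := exists_min_image _ (forestWeight δ _) hX
  set C := ∑ k ∈ supportForests δ B (transientStates δ B t), forestWeight δ _ k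
  have hC : 0 < C := sum_pos hc hX
  -- the smallest `δ`-weight over `e` times their sum: the margin `exists_monomial_gap` needs
  refine ⟨forestWeight δ _ j₀ / (Real.exp 1 * C), by have := hc j₀ hj₀; positivity,
    fun σ hσ hσB hnear => ?_⟩
  rw [reachProb_policyMatrix_eq_one_sub hδ hσ hσB, sub_lt_sub_iff_left,
    div_lt_iff₀ (forestSum_policyKernel_pos hδ hσ hσB)] at hnear
  obtain ⟨j, hj, hgap⟩ := exists_monomial_gap hδ hσ hσB hX
    (fun j hj => by rw [div_mul_cancel₀ _ (by positivity)]; exact hmin j hj) hnear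
  obtain ⟨b, hb⟩ : B.Nonempty := by
    obtain ⟨b, -, hb⟩ := exists_ne_zero_of_sum_ne_zero (hσ.2 ▸ one_ne_zero : ∑ a, σ a ≠ 0)
    exact ⟨b, (hσB b).1 ((hσ.1 b).lt_of_ne' hb)⟩
  have hlab {i} (hi : i ∈ supportForests δ B (transientStates δ B t)) (x) : 0 < σ (i.2 x) :=
    (hσB _).2 ((mem_filter.1 hi).2 x).1
  exact ⟨_, ⟨b, by simp [hb]⟩, tendsto_reachProb_rankPolicy hδ ⟨b, hb⟩ hj
    (L := fun a => ⌈((Fintype.card (transientStates δ B t) : ℝ) + 1) * -Real.log (σ a)⌉₊)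
    fun i hi =>
    sum_natCeil_log_lt (fun a => (mem_Icc_of_mem_stdSimplex hσ a).2) (hlab hj)
      (hlab (mem_filter.1 hi).1) (hgap i hi)⟩

end LimitSure

theorem limitSure_iff_rank_witness_general {S A : Type*} [Fintype S] [Fintype A]
    [DecidableEq S]
    (δ : S → A → S → ℝ)
    (hδ : ∀ s a, (∀ s', 0 ≤ δ s a s') ∧ (∑ s', δ s a s') = 1)
    (s₀ top : S) :
    sSup {x : ℝ | ∃ σ : A → ℝ, (∀ a, 0 ≤ σ a) ∧ (∑ a, σ a) = 1 ∧
        x = ReachProb (fun s s' => ∑ a, σ a * δ s a s') top s₀} = 1 ↔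
      ∃ r : A → Option ℕ, (∃ a, r a ≠ none) ∧
        Filter.Tendsto
          (fun ε : ℝ => ReachProb
            (fun s s' => ∑ a,
              (rankWeight r a ε / ∑ a', rankWeight r a' ε) * δ s a s') top s₀)
          (nhdsWithin 0 (Set.Ioi 0)) (nhds 1) := by
  set T := {x : ℝ | ∃ σ : A → ℝ, (∀ a, 0 ≤ σ a) ∧ (∑ a, σ a) = 1 ∧
    x = ReachProb (fun s s' => ∑ a, σ a * δ s a s') top s₀}
  have hle : ∀ x ∈ T, x ≤ 1 := by
    rintro x ⟨σ, hσ0, hσ1, rfl⟩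
    exact reachProb_le_one (policyMatrix_mem_rowStochastic hδ ⟨hσ0, hσ1⟩) s₀
  constructor
  · intro hsup
    choose η hη hwit using fun B => exists_rank_witness_of_near_one (t := top) hδ B s₀
    set η₀ := univ.inf' univ_nonempty η
    have hη₀ : 0 < η₀ := (lt_inf'_iff univ_nonempty).2 fun B _ => hη B
    have hT : T.Nonempty := Set.nonempty_iff_ne_empty.2 fun h => by
      rw [h, Real.sSup_empty] at hsup
      exact zero_ne_one hsup
    obtain ⟨_, ⟨σ, hσ0, hσ1, rfl⟩, hnear⟩ := exists_lt_of_lt_csSup hT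
      (show 1 - η₀ < sSup T by rw [hsup]; linarith)
    classical
    exact hwit (univ.filter (0 < σ ·)) σ ⟨hσ0, hσ1⟩ (fun a => by simp)
      ((sub_le_sub_left (inf'_le η (mem_univ _)) 1).trans_lt hnear)
  · rintro ⟨r, hr, hlim⟩
    refine le_antisymm (Real.sSup_le hle zero_le_one) (le_of_tendsto hlim ?_)
    filter_upwards [self_mem_nhdsWithin] with ε hε
    exact le_csSup ⟨1, hle⟩ ⟨_, (rankPolicy_mem_stdSimplex hr hε).1,
      (rankPolicy_mem_stdSimplex hr hε).2, rfl⟩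

/-- A blind MDP is limit-sure winning under memoryless policies iff it admits a
rank policy witness: a rank assignment `r : A → Option ℕ` (not everywhere `none`)
such that the normalized policies `σ_ε(a) = ε^{r a} / Σ_{a'} ε^{r a'}` have
reachability probability tending to `1` as `ε → 0⁺`. -/
theorem limitSure_iff_rank_witness {S A : Type*} [Fintype S] [Fintype A]
    [DecidableEq S] [Nonempty S] [Nonempty A]
    (δ : S → A → S → ℝ)
    (hδ : ∀ s a, (∀ s', 0 ≤ δ s a s') ∧ (∑ s', δ s a s') = 1)
    (s₀ top : S) :
    sSup {x : ℝ | ∃ σ : A → ℝ, (∀ a, 0 ≤ σ a) ∧ (∑ a, σ a) = 1 ∧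
        x = ReachProb (fun s s' => ∑ a, σ a * δ s a s') top s₀} = 1 ↔
      ∃ r : A → Option ℕ, (∃ a, r a ≠ none) ∧
        Filter.Tendsto
          (fun ε : ℝ => ReachProb
            (fun s s' => ∑ a,
              (rankWeight r a ε / ∑ a', rankWeight r a' ε) * δ s a s') top s₀)
          (nhdsWithin 0 (Set.Ioi 0)) (nhds 1) :=
  limitSure_iff_rank_witness_general δ hδ s₀ top
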